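/- Let H be a separable complex Hilbert space, let (U_n)_{n∈ℕ} and (W_n)_{n∈ℕ} be sequences of unitary operators on H, and let x, y ∈ H. If the pair ((U_n x)_{n∈ℕ}, (W_n y)_{n∈ℕ}) is a framing for H, i.e. for every z ∈ H the family (⟨z, W_n y⟩·U_n x)_{n∈ℕ} is summable with sum z, then both (U_n x)_{n∈ℕ} and (W_n y)_{n∈ℕ} are frames for H. -/

import Mathlib

/-!
The partial sums `∑_{n ∈ s} ⟪W n y, ·⟫ • U n x` of the framing expansion are pointwise bounded,
hence uniformly bounded by Banach–Steinhaus, and so are their adjoints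
`∑_{n ∈ s} ⟪U n x, ·⟫ • W n y`. In a Hilbert space, a family whose sums over all finite sets are
bounded by `c` is square-summable with `∑ ‖vₙ‖² ≤ 4c²`: by the parallelogram law some choice of
signs has `‖∑ ±vₙ‖² ≥ ∑ ‖vₙ‖²`. As the unitaries preserve `‖x‖` and `‖y‖`, both sequences are
Bessel. The lower frame bound of each then follows from the upper bound of the other, via
`‖v‖² = ∑ ⟪W n y, v⟫ ⟪v, U n x⟫` and a weighted AM–GM inequality.
-/

universe u

/-- A sequence `(zᵢ)` in a complex Hilbert space is a frame if there are constants
`0 < A ≤ B < ∞` with `A‖v‖² ≤ ∑ᵢ |⟨v, zᵢ⟩|² ≤ B‖v‖²` for all `v`. -/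
def IsFrame {H : Type*} [NormedAddCommGroup H] [InnerProductSpace ℂ H]
    (z : ℕ → H) : Prop :=
  ∃ A B : ℝ, 0 < A ∧ A ≤ B ∧ ∀ v : H,
    Summable (fun n : ℕ => ‖(inner ℂ v (z n) : ℂ)‖ ^ 2) ∧
    A * ‖v‖ ^ 2 ≤ ∑' n : ℕ, ‖(inner ℂ v (z n) : ℂ)‖ ^ 2 ∧
    ∑' n : ℕ, ‖(inner ℂ v (z n) : ℂ)‖ ^ 2 ≤ B * ‖v‖ ^ 2

open Finset InnerProductSpace

theorem Summable.exists_forall_norm_sum_le {ι E : Type*} [SeminormedAddCommGroup E]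
    {f : ι → E} (hf : Summable f) : ∃ C, ∀ s : Finset ι, ‖∑ i ∈ s, f i‖ ≤ C := by
  classical
  obtain ⟨t, ht⟩ := hf.vanishing (Metric.ball_mem_nhds 0 one_pos)
  refine ⟨∑ i ∈ t, ‖f i‖ + 1, fun s => ?_⟩
  rw [← sum_inter_add_sum_sdiff s t]
  calc ‖∑ i ∈ s ∩ t, f i + ∑ i ∈ s \ t, f i‖
      ≤ ‖∑ i ∈ s ∩ t, f i‖ + ‖∑ i ∈ s \ t, f i‖ := norm_add_le _ _
    _ ≤ ∑ i ∈ t, ‖f i‖ + 1 := by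
      gcongr
      · exact (norm_sum_le _ _).trans
          (sum_le_sum_of_subset_of_nonneg inter_subset_right fun _ _ _ => norm_nonneg _)
      · simpa using (ht (s \ t) sdiff_disjoint).out.le

theorem exists_forall_norm_sum_le_of_summable_apply {𝕜 E F ι : Type*}
    [NontriviallyNormedField 𝕜] [NormedAddCommGroup E] [NormedSpace 𝕜 E] [CompleteSpace E]
    [NormedAddCommGroup F] [NormedSpace 𝕜 F] {T : ι → E →L[𝕜] F}
    (hT : ∀ z, Summable fun i => T i z) :
    ∃ C, 0 < C ∧ ∀ s : Finset ι, ‖∑ i ∈ s, T i‖ ≤ C := by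
  obtain ⟨C, hC⟩ := banach_steinhaus (g := fun s : Finset ι => ∑ i ∈ s, T i) fun z => by
    obtain ⟨M, hM⟩ := (hT z).exists_forall_norm_sum_le
    exact ⟨M, fun s => by simpa only [_root_.sum_apply] using hM s⟩
  exact ⟨max C 1, by positivity, fun s => (hC s).trans (le_max_left _ _)⟩

section SignedSums

variable {E ι : Type*} [SeminormedAddCommGroup E]

theorem exists_subset_sum_norm_sq_le_norm_sq (𝕜 : Type*) [RCLike 𝕜] [InnerProductSpace 𝕜 E]
    [DecidableEq ι] (v : ι → E) (F : Finset ι) :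
    ∃ s ⊆ F, ∑ i ∈ F, ‖v i‖ ^ 2 ≤ ‖∑ i ∈ s, v i - ∑ i ∈ F \ s, v i‖ ^ 2 := by
  induction F using Finset.induction_on with
  | empty => exact ⟨∅, empty_subset _, by simp⟩
  | @insert a F ha ih =>
    obtain ⟨s, hsF, hs⟩ := ih
    have has : a ∉ s := fun h => ha (hsF h)
    set w := ∑ i ∈ s, v i - ∑ i ∈ F \ s, v i with hw
    have hpar := parallelogram_law_with_norm 𝕜 w (v a)
    rw [sum_insert ha]
    by_cases hplus : ‖w‖ ^ 2 + ‖v a‖ ^ 2 ≤ ‖w + v a‖ ^ 2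
    · refine ⟨insert a s, insert_subset_insert a hsF, ?_⟩
      rw [sum_insert has, insert_sdiff_insert, sdiff_insert_of_notMem ha,
        show v a + ∑ i ∈ s, v i - ∑ i ∈ F \ s, v i = w + v a by rw [hw]; abel]
      linarith
    · refine ⟨s, hsF.trans (subset_insert a F), ?_⟩
      rw [insert_sdiff_of_notMem _ has, sum_insert fun h => ha (mem_sdiff.1 h).1,
        show ∑ i ∈ s, v i - (v a + ∑ i ∈ F \ s, v i) = w - v a by rw [hw]; abel]
      linarith

theorem sum_norm_sq_le_of_forall_norm_sum_le (𝕜 : Type*) [RCLike 𝕜] [InnerProductSpace 𝕜 E]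
    (v : ι → E) {c : ℝ} (hc : ∀ s : Finset ι, ‖∑ i ∈ s, v i‖ ≤ c) (F : Finset ι) :
    ∑ i ∈ F, ‖v i‖ ^ 2 ≤ (2 * c) ^ 2 := by
  classical
  obtain ⟨s, -, hs⟩ := exists_subset_sum_norm_sq_le_norm_sq 𝕜 v F
  have hsub : ‖∑ i ∈ s, v i - ∑ i ∈ F \ s, v i‖ ≤ 2 * c :=
    (norm_sub_le _ _).trans (by linarith [hc s, hc (F \ s)])
  exact hs.trans (pow_le_pow_left₀ (norm_nonneg _) hsub 2)

end SignedSums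

section Bessel

variable {𝕜 E ι : Type*} [RCLike 𝕜] [NormedAddCommGroup E] [InnerProductSpace 𝕜 E]

variable (𝕜) in
/-- Stated on finite partial sums, so that it includes the summability of the coefficients. -/
def HasBesselBound (w : ι → E) (B : ℝ) : Prop :=
  ∀ (v : E) (s : Finset ι), ∑ i ∈ s, ‖(inner 𝕜 v (w i) : 𝕜)‖ ^ 2 ≤ B * ‖v‖ ^ 2

variable {u w : ι → E} {B B' : ℝ}

theorem HasBesselBound.summable (hw : HasBesselBound 𝕜 w B) (v : E) :
    Summable fun i => ‖(inner 𝕜 v (w i) : 𝕜)‖ ^ 2 :=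
  summable_of_sum_le (fun _ => sq_nonneg _) (hw v)

theorem HasBesselBound.tsum_le (hw : HasBesselBound 𝕜 w B) (v : E) :
    ∑' i, ‖(inner 𝕜 v (w i) : 𝕜)‖ ^ 2 ≤ B * ‖v‖ ^ 2 :=
  (hw.summable v).tsum_le_of_sum_le (hw v)

theorem hasBesselBound_of_forall_norm_sum_rankOne_le {a C : ℝ} (hu : ∀ i, ‖u i‖ = a)
    (ha : 0 < a) (hC : ∀ s : Finset ι, ‖∑ i ∈ s, rankOne 𝕜 (u i) (w i)‖ ≤ C) :
    HasBesselBound 𝕜 w ((2 * C / a) ^ 2) := by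
  intro v F
  have hsyn : ∀ s : Finset ι, ‖∑ i ∈ s, (inner 𝕜 (w i) v : 𝕜) • u i‖ ≤ C * ‖v‖ := fun s => by
    simpa only [_root_.sum_apply, rankOne_apply] using
      (∑ i ∈ s, rankOne 𝕜 (u i) (w i)).le_of_opNorm_le (hC s) v
  have hsq := sum_norm_sq_le_of_forall_norm_sum_le 𝕜 _ hsyn F
  simp only [norm_smul, mul_pow, hu, norm_inner_symm (w _) v, ← sum_mul] at hsq
  rw [div_pow, div_mul_eq_mul_div, le_div_iff₀ (by positivity)]
  linarith

theorem norm_sum_rankOne_swap [CompleteSpace E] (u w : ι → E) (s : Finset ι) :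
    ‖∑ i ∈ s, rankOne 𝕜 (w i) (u i)‖ = ‖∑ i ∈ s, rankOne 𝕜 (u i) (w i)‖ := by
  rw [← LinearIsometryEquiv.norm_map ContinuousLinearMap.adjoint, map_sum]
  simp only [adjoint_rankOne]

theorem norm_sq_le_tsum_mul_of_hasSum {v : E}
    (hv : HasSum (fun i => (inner 𝕜 (w i) v : 𝕜) • u i) v) :
    ‖v‖ ^ 2 ≤ ∑' i, ‖(inner 𝕜 v (w i) : 𝕜)‖ * ‖(inner 𝕜 v (u i) : 𝕜)‖ := by
  have hinner : HasSum (fun i => (inner 𝕜 (w i) v : 𝕜) * inner 𝕜 v (u i)) (inner 𝕜 v v) := by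
    simpa only [innerSL_apply_apply, inner_smul_right, mul_comm] using (innerSL 𝕜 v).hasSum hv
  have hnorm : ∀ i, ‖(inner 𝕜 (w i) v : 𝕜) * inner 𝕜 v (u i)‖
      = ‖(inner 𝕜 v (w i) : 𝕜)‖ * ‖(inner 𝕜 v (u i) : 𝕜)‖ := fun i => by
    rw [norm_mul, norm_inner_symm]
  -- unconditional summability in the finite-dimensional space `𝕜` is absolute
  have habs : Summable fun i => ‖(inner 𝕜 v (w i) : 𝕜)‖ * ‖(inner 𝕜 v (u i) : 𝕜)‖ :=
    (summable_norm_iff.2 hinner.summable).congr hnorm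
  calc ‖v‖ ^ 2 = ‖(inner 𝕜 v v : 𝕜)‖ := by rw [inner_self_eq_norm_sq_to_K]; simp
    _ ≤ _ := hinner.norm_le_of_bounded habs.hasSum fun i => (hnorm i).le

theorem HasBesselBound.norm_sq_le_mul_tsum (hw : HasBesselBound 𝕜 w B) (hB : 0 < B)
    (hu : HasBesselBound 𝕜 u B') {v : E}
    (hv : ‖v‖ ^ 2 ≤ ∑' i, ‖(inner 𝕜 v (w i) : 𝕜)‖ * ‖(inner 𝕜 v (u i) : 𝕜)‖) :
    ‖v‖ ^ 2 ≤ B * ∑' i, ‖(inner 𝕜 v (u i) : 𝕜)‖ ^ 2 := by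
  set a := fun i => ‖(inner 𝕜 v (w i) : 𝕜)‖
  set b := fun i => ‖(inner 𝕜 v (u i) : 𝕜)‖
  have hamgm : ∀ i, a i * b i ≤ (a i ^ 2 / B + B * b i ^ 2) / 2 := fun i => by
    rw [le_div_iff₀ two_pos, div_add' _ _ _ hB.ne', le_div_iff₀ hB]
    nlinarith [sq_nonneg (a i - B * b i)]
  have hg : Summable fun i => (a i ^ 2 / B + B * b i ^ 2) / 2 :=
    (((hw.summable v).div_const B).add ((hu.summable v).mul_left B)).div_const 2
  have hab : Summable fun i => a i * b i :=
    hg.of_nonneg_of_le (fun i => mul_nonneg (norm_nonneg _) (norm_nonneg _)) hamgm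
  have hP : (∑' i, a i ^ 2) / B ≤ ‖v‖ ^ 2 := by
    rw [div_le_iff₀ hB, mul_comm]; exact hw.tsum_le v
  have hhalf : ‖v‖ ^ 2 ≤ (‖v‖ ^ 2 + B * ∑' i, b i ^ 2) / 2 :=
    calc ‖v‖ ^ 2 ≤ ∑' i, a i * b i := hv
      _ ≤ ∑' i, (a i ^ 2 / B + B * b i ^ 2) / 2 := hab.tsum_le_tsum hamgm hg
      _ = ((∑' i, a i ^ 2) / B + B * ∑' i, b i ^ 2) / 2 := by
        rw [tsum_div_const, ((hw.summable v).div_const B).tsum_add ((hu.summable v).mul_left B),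
          tsum_div_const, tsum_mul_left]
      _ ≤ (‖v‖ ^ 2 + B * ∑' i, b i ^ 2) / 2 := by gcongr
  linarith

end Bessel

theorem IsFrame.of_hasBesselBound {H : Type*} [NormedAddCommGroup H] [InnerProductSpace ℂ H]
    {u w : ℕ → H} {Bu Bw : ℝ} (hu : HasBesselBound ℂ u Bu) (hw : HasBesselBound ℂ w Bw)
    (hBw : 0 < Bw) (hlow : ∀ v, ‖v‖ ^ 2 ≤ ∑' n, ‖(inner ℂ v (w n) : ℂ)‖ * ‖(inner ℂ v (u n) : ℂ)‖) :
    IsFrame u :=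
  ⟨Bw⁻¹, max Bw⁻¹ Bu, inv_pos.2 hBw, le_max_left _ _, fun v =>
    ⟨hu.summable v, (inv_mul_le_iff₀ hBw).2 (hw.norm_sq_le_mul_tsum hBw hu (hlow v)),
      (hu.tsum_le v).trans (by gcongr; exact le_max_right _ _)⟩⟩

theorem IsFrame.of_subsingleton {H : Type*} [NormedAddCommGroup H] [InnerProductSpace ℂ H]
    [Subsingleton H] (z : ℕ → H) : IsFrame z :=
  ⟨1, 1, one_pos, le_rfl, fun v => by simp [Subsingleton.elim v 0]⟩

theorem unitary_system_framing_gives_frames_general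
    {H : Type u} [NormedAddCommGroup H] [InnerProductSpace ℂ H] [CompleteSpace H]
    (U W : ℕ → (H ≃ₗᵢ[ℂ] H)) (x y : H)
    (h_framing : ∀ z : H, HasSum (fun n : ℕ => (inner ℂ (W n y) z : ℂ) • U n x) z) :
    IsFrame (fun n => U n x) ∧ IsFrame (fun n => W n y) := by
  rcases subsingleton_or_nontrivial H with hH | hH
  · exact ⟨.of_subsingleton _, .of_subsingleton _⟩
  obtain ⟨z, hz⟩ := exists_ne (0 : H)
  have hx : 0 < ‖x‖ := norm_pos_iff.2 fun hx0 => hz <| by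
    have := h_framing z
    simp only [hx0, map_zero, smul_zero] at this
    exact this.unique hasSum_zero
  have hy : 0 < ‖y‖ := norm_pos_iff.2 fun hy0 => hz <| by
    have := h_framing z
    simp only [hy0, map_zero, inner_zero_left, zero_smul] at this
    exact this.unique hasSum_zero
  obtain ⟨C, hC, hsum⟩ := exists_forall_norm_sum_le_of_summable_apply
    (T := fun n => rankOne ℂ (U n x) (W n y)) fun z => (h_framing z).summable
  have hW := hasBesselBound_of_forall_norm_sum_rankOne_le (fun n => (U n).norm_map x) hx hsum
  have hU := hasBesselBound_of_forall_norm_sum_rankOne_le (fun n => (W n).norm_map y) hy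
    fun s => (norm_sum_rankOne_swap _ _ s).trans_le (hsum s)
  have hlow := fun v => norm_sq_le_tsum_mul_of_hasSum (h_framing v)
  exact ⟨.of_hasBesselBound hU hW (by positivity) hlow,
    .of_hasBesselBound hW hU (by positivity) fun v => by simpa only [mul_comm] using hlow v⟩

/-- **Framings generated by unitary systems consist of frames**
(Han–Larson–Liu–Liu).  Let `(Uₙ)` and `(Wₙ)` be sequences of unitary operators on a
separable complex Hilbert space `H` and `x, y ∈ H`.  If `((Uₙ x), (Wₙ y))` is a framing
for `H`, then both `(Uₙ x)` and `(Wₙ y)` are frames for `H`. -/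
theorem unitary_system_framing_gives_frames
    {H : Type u} [NormedAddCommGroup H] [InnerProductSpace ℂ H] [CompleteSpace H]
    [TopologicalSpace.SeparableSpace H]
    (U W : ℕ → (H ≃ₗᵢ[ℂ] H)) (x y : H)
    (h_framing : ∀ z : H, HasSum (fun n : ℕ => (inner ℂ (W n y) z : ℂ) • U n x) z) :
    IsFrame (fun n => U n x) ∧ IsFrame (fun n => W n y) :=
  unitary_system_framing_gives_frames_general U W x y h_framing
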